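/- arXiv:math/0701174 — 4 statements merged into one kernel-verified Lean document; each statement's English description precedes it below -/
import Mathlib

section
/- Let u ≥ 0, ε ≥ 0, z > 0 with (u,ε) ≠ (0,0) or z > 0. Then (1/(2π)) ∫₀^{2π} log(u² + ε² + z² + 2uz·cos θ) dθ ≥ max(log(u² + ε²), log z²). -/
/-!
Write `y + 2w cos θ = |a + b e^{iθ}|²`, where `a² ≥ b²` are the roots of `X² - yX + w²`. Since the
circle average of `log |· + b|` over a circle of radius `|a| ≥ |b|` is `log |a|`, the average of
`log (y + 2w cos θ)` is exactly `log a² = log ((y + √(y² - 4w²)) / 2)`. For `y = u² + ε² + z²` and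
`w = uz` the discriminant is `(u² + ε² - z²)² + 4ε²z²`, so `a²` dominates both `u² + ε²` and `z²`.
-/

open Real

theorem sq_norm_circleMap_add (a b θ : ℝ) :
    ‖circleMap 0 a θ + b‖ ^ 2 = a ^ 2 + b ^ 2 + 2 * a * b * cos θ := by
  rw [Complex.sq_norm, Complex.normSq_apply]
  simp only [circleMap, zero_add, Complex.add_re, Complex.add_im, Complex.mul_re, Complex.mul_im,
    Complex.ofReal_re, Complex.ofReal_im, Complex.exp_ofReal_mul_I_re,
    Complex.exp_ofReal_mul_I_im]
  nlinarith [sin_sq_add_cos_sq θ]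

theorem average_log_sq_add_sq_add_two_mul_cos {a b : ℝ} (hba : |b| ≤ |a|) :
    (2 * π)⁻¹ * ∫ θ in 0..2 * π, log (a ^ 2 + b ^ 2 + 2 * a * b * cos θ) = log (a ^ 2) := by
  have hb : (-b : ℂ) ∈ Metric.closedBall 0 |a| := by simpa using hba
  calc (2 * π)⁻¹ * ∫ θ in 0..2 * π, log (a ^ 2 + b ^ 2 + 2 * a * b * cos θ)
      = 2 * circleAverage (log ‖· - (-b : ℂ)‖) 0 a := by
        simp only [circleAverage_def, smul_eq_mul, sub_neg_eq_add, ← sq_norm_circleMap_add,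
          Real.log_pow, Nat.cast_ofNat, intervalIntegral.integral_const_mul]
        ring
    _ = log (a ^ 2) := by
        rw [circleAverage_log_norm_sub_const_of_mem_closedBall hb, Real.log_pow]; norm_num

theorem average_log_add_two_mul_cos {y w : ℝ} (hw : 0 ≤ w) (hwy : 2 * w ≤ y) :
    (2 * π)⁻¹ * ∫ θ in 0..2 * π, log (y + 2 * w * cos θ)
      = log ((y + √(y ^ 2 - 4 * w ^ 2)) / 2) := by
  have hy : 0 ≤ y := by linarith
  set D := √(y ^ 2 - 4 * w ^ 2)
  have hD0 : 0 ≤ D := Real.sqrt_nonneg _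
  have hD : D ^ 2 = y ^ 2 - 4 * w ^ 2 := Real.sq_sqrt (by nlinarith)
  have hDy : D ≤ y := by nlinarith
  set a := √((y + D) / 2)
  set b := √((y - D) / 2)
  have ha : a ^ 2 = (y + D) / 2 := Real.sq_sqrt (by linarith)
  have hb : b ^ 2 = (y - D) / 2 := Real.sq_sqrt (by linarith)
  have hab : a * b = w := by
    rw [← Real.sqrt_mul (by linarith), show (y + D) / 2 * ((y - D) / 2) = w ^ 2 by nlinarith,
      Real.sqrt_sq hw]
  have hba : |b| ≤ |a| := by
    rw [abs_of_nonneg (Real.sqrt_nonneg _), abs_of_nonneg (Real.sqrt_nonneg _)]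
    exact Real.sqrt_le_sqrt (by linarith)
  have hintegrand : ∀ θ, y + 2 * w * cos θ = a ^ 2 + b ^ 2 + 2 * a * b * cos θ := fun θ => by
    rw [ha, hb, mul_assoc 2 a, hab]; ring
  simp_rw [hintegrand, average_log_sq_add_sq_add_two_mul_cos hba, ha]

theorem abs_sub_le_sqrt (u ε z : ℝ) :
    |u ^ 2 + ε ^ 2 - z ^ 2| ≤ √((u ^ 2 + ε ^ 2 + z ^ 2) ^ 2 - 4 * (u * z) ^ 2) :=
  Real.abs_le_sqrt (by nlinarith [sq_nonneg (ε * z)])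

theorem stmt_6_general (u ε z : ℝ) (hu : 0 ≤ u) (hz : 0 < z)
    (hne : (u, ε) ≠ (0, 0)) :
    (1 / (2 * π)) * ∫ θ in (0:ℝ)..(2 * π),
        Real.log (u ^ 2 + ε ^ 2 + z ^ 2 + 2 * u * z * Real.cos θ)
      ≥ max (Real.log (u ^ 2 + ε ^ 2)) (Real.log (z ^ 2)) := by
  have hA : 0 < u ^ 2 + ε ^ 2 := by
    refine (add_nonneg (sq_nonneg u) (sq_nonneg ε)).lt_of_ne fun h => hne ?_
    obtain ⟨hu0, hε0⟩ := (add_eq_zero_iff_of_nonneg (sq_nonneg u) (sq_nonneg ε)).mp h.symm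
    rw [pow_eq_zero_iff two_ne_zero] at hu0 hε0
    rw [hu0, hε0]
  have hwy : 2 * (u * z) ≤ u ^ 2 + ε ^ 2 + z ^ 2 := by nlinarith [sq_nonneg (u - z), sq_nonneg ε]
  rw [one_div, ge_iff_le]
  simp_rw [mul_assoc 2 u z]
  rw [average_log_add_two_mul_cos (mul_nonneg hu hz.le) hwy]
  obtain ⟨h₁, h₂⟩ := abs_le.mp (abs_sub_le_sqrt u ε z)
  exact max_le (log_le_log hA (by linarith)) (log_le_log (by positivity) (by linarith))

theorem stmt_6 (u ε z : ℝ) (hu : 0 ≤ u) (hε : 0 ≤ ε) (hz : 0 < z)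
    (hne : (u, ε) ≠ (0, 0)) :
    (1 / (2 * π)) * ∫ θ in (0:ℝ)..(2 * π),
        Real.log (u ^ 2 + ε ^ 2 + z ^ 2 + 2 * u * z * Real.cos θ)
      ≥ max (Real.log (u ^ 2 + ε ^ 2)) (Real.log (z ^ 2)) :=
  stmt_6_general u ε z hu hz hne
end

section
/- Let α > 0, t₀ ∈ ℝ, δ > 0, and let r : [t₀-δ, t₀] → [0,∞) be continuously differentiable on [t₀-δ, t₀) with r(t) > 0 for t < t₀, r(t₀) = 0, and suppose there exist constants 0 < c₁ ≤ c₂ such that c₁ ≤ -ṙ(t)·r(t)^{α/2} ≤ c₂ for all t ∈ [t₀-δ, t₀). Then for all t ∈ [t₀-δ, t₀], k₁·(t₀-t)^{2/(α+2)} ≤ r(t) ≤ k₂·(t₀-t)^{2/(α+2)}, where kᵢ = ((α+2)/2 · cᵢ)^{2/(α+2)} for i = 1,2. -/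
/-! With `p = (α + 2) / 2`, the hypothesis says that `r ^ p / p` has derivative `r' * r ^ (α / 2)`
between `-c₂` and `-c₁`. Since it vanishes at `t₀`, the mean value inequality gives
`c₁ (t₀ - t) ≤ r t ^ p / p ≤ c₂ (t₀ - t)`, and taking `p`-th roots yields the bounds. -/

open Set

theorem HasDerivAt.rpow_div_self {f : ℝ → ℝ} {f' x p : ℝ} (hf : HasDerivAt f f' x)
    (hx : 0 < f x) (hp : p ≠ 0) :
    HasDerivAt (fun y => f y ^ p / p) (f' * f x ^ (p - 1)) x := by
  refine ((hf.rpow_const (Or.inl hx.ne')).div_const p).congr_deriv ?_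
  field_simp

theorem mul_sub_le_sub_le_mul_sub_of_hasDerivAt {f f' : ℝ → ℝ} {a b c₁ c₂ t : ℝ}
    (hf : ContinuousOn f (Icc a b)) (hf' : ∀ x ∈ Ioo a b, HasDerivAt f (f' x) x)
    (hbound : ∀ x ∈ Ioo a b, c₁ ≤ -f' x ∧ -f' x ≤ c₂) (ht : t ∈ Icc a b) :
    c₁ * (b - t) ≤ f t - f b ∧ f t - f b ≤ c₂ * (b - t) := by
  have hb : b ∈ Icc a b := right_mem_Icc.2 (ht.1.trans ht.2)
  have hdiff : DifferentiableOn ℝ f (interior (Icc a b)) := by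
    rw [interior_Icc]
    exact fun x hx => (hf' x hx).differentiableAt.differentiableWithinAt
  have hlower := (convex_Icc a b).mul_sub_le_image_sub_of_le_deriv hf hdiff (C := -c₂)
    (by rw [interior_Icc]; exact fun x hx => by linarith [(hf' x hx).deriv, (hbound x hx).2])
    t ht b hb ht.2
  have hupper := (convex_Icc a b).image_sub_le_mul_sub_of_deriv_le hf hdiff (C := -c₁)
    (by rw [interior_Icc]; exact fun x hx => by linarith [(hf' x hx).deriv, (hbound x hx).1])
    t ht b hb ht.2
  constructor <;> linarith

namespace Real

theorem mul_rpow_inv_le_of_mul_le_rpow_div {p c s x : ℝ} (hp : 0 < p) (hc : 0 ≤ c)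
    (hs : 0 ≤ s) (hx : 0 ≤ x) (h : c * s ≤ x ^ p / p) : (p * c) ^ p⁻¹ * s ^ p⁻¹ ≤ x := by
  rw [← mul_rpow (by positivity) hs, rpow_inv_le_iff_of_pos (by positivity) hx hp]
  rw [le_div_iff₀ hp] at h
  linarith

theorem le_mul_rpow_inv_of_rpow_div_le {p c s x : ℝ} (hp : 0 < p) (hc : 0 ≤ c) (hs : 0 ≤ s)
    (hx : 0 ≤ x) (h : x ^ p / p ≤ c * s) : x ≤ (p * c) ^ p⁻¹ * s ^ p⁻¹ := by
  rw [← mul_rpow (by positivity) hs, le_rpow_inv_iff_of_pos hx (by positivity) hp]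
  rw [div_le_iff₀ hp] at h
  linarith

end Real

theorem stmt_8_general (α t₀ δ c₁ c₂ : ℝ) (hα : 0 < α)
    (hc₁ : 0 < c₁) (hc₁₂ : c₁ ≤ c₂)
    (r r' : ℝ → ℝ)
    (hrc : ContinuousOn r (Icc (t₀ - δ) t₀))
    (hr' : ∀ t ∈ Ico (t₀ - δ) t₀, HasDerivAt r (r' t) t)
    (hrpos : ∀ t ∈ Ico (t₀ - δ) t₀, 0 < r t)
    (hr0 : r t₀ = 0)
    (hbound : ∀ t ∈ Ico (t₀ - δ) t₀,
      c₁ ≤ -r' t * r t ^ (α / 2) ∧ -r' t * r t ^ (α / 2) ≤ c₂) :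
    ∀ t ∈ Icc (t₀ - δ) t₀,
      ((α + 2) / 2 * c₁) ^ (2 / (α + 2)) * (t₀ - t) ^ (2 / (α + 2)) ≤ r t ∧
      r t ≤ ((α + 2) / 2 * c₂) ^ (2 / (α + 2)) * (t₀ - t) ^ (2 / (α + 2)) := by
  intro t ht
  set p := (α + 2) / 2 with hpdef
  have hp : 0 < p := by positivity
  rw [show 2 / (α + 2) = p⁻¹ from (inv_div _ _).symm]
  have hcont : ContinuousOn (fun y => r y ^ p / p) (Icc (t₀ - δ) t₀) :=
    (hrc.rpow_const fun _ _ => Or.inr hp.le).div_const p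
  have hderiv : ∀ x ∈ Ioo (t₀ - δ) t₀,
      HasDerivAt (fun y => r y ^ p / p) (r' x * r x ^ (α / 2)) x := fun x hx => by
    convert (hr' x (Ioo_subset_Ico_self hx)).rpow_div_self (hrpos x (Ioo_subset_Ico_self hx))
      hp.ne' using 3
    rw [hpdef]
    ring
  have hr0p : r t₀ ^ p / p = 0 := by rw [hr0, Real.zero_rpow hp.ne', zero_div]
  obtain ⟨hlower, hupper⟩ := mul_sub_le_sub_le_mul_sub_of_hasDerivAt hcont hderiv
    (fun x hx => by simpa only [neg_mul] using hbound x (Ioo_subset_Ico_self hx)) ht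
  rw [hr0p, sub_zero] at hlower hupper
  have hrt : 0 ≤ r t := by
    rcases ht.2.lt_or_eq with hlt | rfl
    exacts [(hrpos t ⟨ht.1, hlt⟩).le, hr0.ge]
  have hs : 0 ≤ t₀ - t := sub_nonneg.2 ht.2
  exact ⟨Real.mul_rpow_inv_le_of_mul_le_rpow_div hp hc₁.le hs hrt hlower,
    Real.le_mul_rpow_inv_of_rpow_div_le hp (hc₁.trans_le hc₁₂).le hs hrt hupper⟩

theorem stmt_8 (α t₀ δ c₁ c₂ : ℝ) (hα : 0 < α) (hδ : 0 < δ)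
    (hc₁ : 0 < c₁) (hc₁₂ : c₁ ≤ c₂)
    (r r' : ℝ → ℝ)
    (hrc : ContinuousOn r (Icc (t₀ - δ) t₀))
    (hr' : ∀ t ∈ Ico (t₀ - δ) t₀, HasDerivAt r (r' t) t)
    (hr'c : ContinuousOn r' (Ico (t₀ - δ) t₀))
    (hrpos : ∀ t ∈ Ico (t₀ - δ) t₀, 0 < r t)
    (hr0 : r t₀ = 0)
    (hbound : ∀ t ∈ Ico (t₀ - δ) t₀,
      c₁ ≤ -r' t * r t ^ (α / 2) ∧ -r' t * r t ^ (α / 2) ≤ c₂) :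
    ∀ t ∈ Icc (t₀ - δ) t₀,
      ((α + 2) / 2 * c₁) ^ (2 / (α + 2)) * (t₀ - t) ^ (2 / (α + 2)) ≤ r t ∧
      r t ≤ ((α + 2) / 2 * c₂) ^ (2 / (α + 2)) * (t₀ - t) ^ (2 / (α + 2)) :=
  stmt_8_general α t₀ δ c₁ c₂ hα hc₁ hc₁₂ r r' hrc hr' hrpos hr0 hbound
end

section
/- Let t* < ∞, I* ∈ ℝ, K > 0, ε > 0, and let f : [0, t*) → ℝ be twice continuously differentiable. Suppose that f''(t) ≥ -K whenever f(t) ≥ I* - ε. Then it cannot happen that simultaneously limsup_{t→t*⁻} f(t) = I* and liminf_{t→t*⁻} f(t) < I* - ε. -/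
/-!
If `f` oscillated as described, pick `a' < a < b` within `√(ε / K)` of `t*` with
`f a', f b < I* - ε < I* - ε / 2 < f a`. The maximum of `f` on `[a', b]` is an interior
critical point `m` with `f m > I* - ε / 2`. Up to the first time `s ≥ m` at which `f` reaches
`I* - ε` the bound `f'' ≥ -K` holds, so Taylor gives `f s ≥ f m - K (s - m)² / 2 > I* - ε`,
a contradiction.
-/

open Set Filter Topology

namespace Real

variable {ι : Type*} {l : Filter ι} [l.NeBot] {u : ι → ℝ}

-- Outside the cobounded case `liminf` and `limsup` take the junk value `0` simultaneously.
theorem isCoboundedUnder_ge_of_liminf_lt_limsup (h : liminf u l < limsup u l) :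
    l.IsCoboundedUnder (· ≥ ·) u := by
  by_contra hc
  have hb : ¬ l.IsBoundedUnder (· ≤ ·) u := fun hb => hc hb.isCoboundedUnder_flip
  simp [liminf_of_not_isCoboundedUnder hc, limsup_of_not_isBoundedUnder hb] at h

theorem isCoboundedUnder_le_of_liminf_lt_limsup (h : liminf u l < limsup u l) :
    l.IsCoboundedUnder (· ≤ ·) u := by
  by_contra hc
  have hb : ¬ l.IsBoundedUnder (· ≥ ·) u := fun hb => hc hb.isCoboundedUnder_flip
  simp [limsup_of_not_isCoboundedUnder hc, liminf_of_not_isBoundedUnder hb] at h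

end Real

theorem monotoneOn_Icc_of_hasDerivAt_nonneg {g g' : ℝ → ℝ} {a b : ℝ}
    (hg : ∀ t ∈ Icc a b, HasDerivAt g (g' t) t) (hg' : ∀ t ∈ Ioo a b, 0 ≤ g' t) :
    MonotoneOn g (Icc a b) :=
  monotoneOn_of_hasDerivWithinAt_nonneg (convex_Icc a b)
    (fun t ht => (hg t ht).continuousAt.continuousWithinAt)
    (by simpa only [interior_Icc] using
      fun t ht => (hg t (Ioo_subset_Icc_self ht)).hasDerivWithinAt)
    (by simpa only [interior_Icc] using hg')

-- `f' + K (t - a)` and then `f + K (t - a)² / 2` are monotone on `[a, b]`.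
theorem taylor_lower_bound_of_hasDerivAt_eq_zero {f f' f'' : ℝ → ℝ} {a b K : ℝ}
    (hab : a ≤ b) (hf : ∀ t ∈ Icc a b, HasDerivAt f (f' t) t)
    (hf' : ∀ t ∈ Icc a b, HasDerivAt f' (f'' t) t) (ha : f' a = 0)
    (hK : ∀ t ∈ Ioo a b, -K ≤ f'' t) :
    f a - K * (b - a) ^ 2 / 2 ≤ f b := by
  have hg' : ∀ t ∈ Icc a b, HasDerivAt (fun t => f' t + K * (t - a)) (f'' t + K) t :=
    fun t ht => by simpa using (hf' t ht).fun_add (((hasDerivAt_id' t).sub_const a).const_mul K)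
  have hg'_nonneg : ∀ t ∈ Icc a b, 0 ≤ f' t + K * (t - a) := fun t ht => by
    simpa [ha] using monotoneOn_Icc_of_hasDerivAt_nonneg hg'
      (fun t ht => by linarith [hK t ht]) (left_mem_Icc.2 hab) ht ht.1
  have hg : ∀ t ∈ Icc a b,
      HasDerivAt (fun t => f t + K * (t - a) ^ 2 / 2) (f' t + K * (t - a)) t := fun t ht =>
    ((hf t ht).fun_add
      (((((hasDerivAt_id' t).sub_const a).pow 2).const_mul K).div_const 2)).congr_deriv (by ring)
  have hmono := monotoneOn_Icc_of_hasDerivAt_nonneg hg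
    (fun t ht => hg'_nonneg t (Ioo_subset_Icc_self ht))
    (left_mem_Icc.2 hab) (right_mem_Icc.2 hab) hab
  simp only [sub_self] at hmono
  linarith

theorem ContinuousOn.exists_first_le {f : ℝ → ℝ} {a b c : ℝ} (hab : a ≤ b)
    (hf : ContinuousOn f (Icc a b)) (hb : f b ≤ c) :
    ∃ s ∈ Icc a b, f s ≤ c ∧ ∀ t ∈ Ico a s, c < f t := by
  have hS : IsCompact (Icc a b ∩ f ⁻¹' Iic c) := isCompact_Icc.of_isClosed_subset
    (hf.preimage_isClosed_of_isClosed isClosed_Icc isClosed_Iic) inter_subset_left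
  obtain ⟨s, ⟨hs, hsc⟩, hleast⟩ := hS.exists_isLeast ⟨b, right_mem_Icc.2 hab, hb⟩
  exact ⟨s, hs, hsc, fun t ht => lt_of_not_ge fun htc =>
    ht.2.not_ge (hleast ⟨⟨ht.1, ht.2.le.trans hs.2⟩, htc⟩)⟩

theorem exists_mem_Ioo_hasDerivAt_eq_zero_of_lt_of_lt {f f' : ℝ → ℝ} {a b x : ℝ}
    (hx : x ∈ Icc a b) (hf : ∀ t ∈ Icc a b, HasDerivAt f (f' t) t) (ha : f a < f x)
    (hb : f b < f x) : ∃ m ∈ Ioo a b, f x ≤ f m ∧ f' m = 0 := by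
  obtain ⟨m, hm, hmax⟩ := isCompact_Icc.exists_isMaxOn ⟨x, hx⟩
    (fun t ht => (hf t ht).continuousAt.continuousWithinAt)
  have hxm : f x ≤ f m := hmax hx
  have hm' : m ∈ Ioo a b :=
    ⟨hm.1.lt_of_ne (by rintro rfl; linarith), hm.2.lt_of_ne (by rintro rfl; linarith)⟩
  exact ⟨m, hm', hxm, (hmax.isLocalMax (Icc_mem_nhds hm'.1 hm'.2)).hasDerivAt_eq_zero (hf m hm)⟩

theorem lt_of_hasDerivAt_eq_zero_of_neg_le_deriv2 {f f' f'' : ℝ → ℝ} {a b c K : ℝ}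
    (hK : 0 ≤ K) (hab : a ≤ b) (hf : ∀ t ∈ Icc a b, HasDerivAt f (f' t) t)
    (hf' : ∀ t ∈ Icc a b, HasDerivAt f' (f'' t) t) (ha : f' a = 0)
    (hconv : ∀ t ∈ Icc a b, c ≤ f t → -K ≤ f'' t) (hgap : c + K * (b - a) ^ 2 / 2 < f a) :
    c < f b := by
  by_contra! hb
  obtain ⟨s, hs, hsc, habove⟩ := ContinuousOn.exists_first_le hab
    (fun t ht => (hf t ht).continuousAt.continuousWithinAt) hb
  have hsub : Icc a s ⊆ Icc a b := Icc_subset_Icc_right hs.2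
  have htaylor := taylor_lower_bound_of_hasDerivAt_eq_zero hs.1 (fun t ht => hf t (hsub ht))
    (fun t ht => hf' t (hsub ht)) ha
    (fun t ht => hconv t (hsub (Ioo_subset_Icc_self ht)) (habove t (Ioo_subset_Ico_self ht)).le)
  have : K * (s - a) ^ 2 ≤ K * (b - a) ^ 2 := by gcongr <;> linarith [hs.1, hs.2]
  linarith

theorem stmt_12_general (tstar Istar K ε : ℝ) (htstar : 0 < tstar) (hK : 0 < K) (hε : 0 < ε)
    (f f' f'' : ℝ → ℝ)
    (hf' : ∀ t ∈ Ico (0:ℝ) tstar, HasDerivAt f (f' t) t)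
    (hf'' : ∀ t ∈ Ico (0:ℝ) tstar, HasDerivAt f' (f'' t) t)
    (hconv : ∀ t ∈ Ico (0:ℝ) tstar, Istar - ε ≤ f t → -K ≤ f'' t) :
    ¬ (Filter.limsup f (nhdsWithin tstar (Iio tstar)) = Istar ∧
       Filter.liminf f (nhdsWithin tstar (Iio tstar)) < Istar - ε) := by
  rintro ⟨hsup, hinf⟩
  have hlt : liminf f (𝓝[<] tstar) < limsup f (𝓝[<] tstar) := by linarith
  have hlow : ∃ᶠ t in 𝓝[<] tstar, f t < Istar - ε :=
    frequently_lt_of_liminf_lt (Real.isCoboundedUnder_ge_of_liminf_lt_limsup hlt) hinf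
  have hhigh : ∃ᶠ t in 𝓝[<] tstar, Istar - ε / 2 < f t :=
    frequently_lt_of_lt_limsup (Real.isCoboundedUnder_le_of_liminf_lt_limsup hlt) (by linarith)
  rw [(nhdsLT_basis tstar).frequently_iff] at hlow hhigh
  have hεK : 0 < ε / K := div_pos hε hK
  obtain ⟨a', ha', hfa'⟩ := hlow (max 0 (tstar - √(ε / K)))
    (max_lt htstar (by linarith [Real.sqrt_pos.2 hεK]))
  obtain ⟨a, ha, hfa⟩ := hhigh a' ha'.2
  obtain ⟨b, hb, hfb⟩ := hlow a ha.2
  have hwindow : Icc a' b ⊆ Ico 0 tstar := fun t ht =>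
    ⟨(le_max_left _ _).trans (ha'.1.le.trans ht.1), ht.2.trans_lt hb.2⟩
  obtain ⟨m, hm, hfm, hf'm⟩ := exists_mem_Ioo_hasDerivAt_eq_zero_of_lt_of_lt
    ⟨ha.1.le, hb.1.le⟩ (fun t ht => hf' t (hwindow ht)) (by linarith) (by linarith)
  have hsub : Icc m b ⊆ Icc a' b := Icc_subset_Icc_left hm.1.le
  have hclose : K * (b - m) ^ 2 ≤ ε := by
    have : b - m ≤ √(ε / K) := by
      linarith [le_max_right 0 (tstar - √(ε / K)), ha'.1, hm.1, hb.2]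
    calc K * (b - m) ^ 2 ≤ K * √(ε / K) ^ 2 := by gcongr; linarith [hm.2]
      _ = ε := by rw [Real.sq_sqrt hεK.le]; field_simp
  have := lt_of_hasDerivAt_eq_zero_of_neg_le_deriv2 hK.le hm.2.le
    (fun t ht => hf' t (hwindow (hsub ht))) (fun t ht => hf'' t (hwindow (hsub ht))) hf'm
    (fun t ht => hconv t (hwindow (hsub ht))) (by linarith)
  linarith

theorem stmt_12 (tstar Istar K ε : ℝ) (htstar : 0 < tstar) (hK : 0 < K) (hε : 0 < ε)
    (f f' f'' : ℝ → ℝ)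
    (hf' : ∀ t ∈ Ico (0:ℝ) tstar, HasDerivAt f (f' t) t)
    (hf'' : ∀ t ∈ Ico (0:ℝ) tstar, HasDerivAt f' (f'' t) t)
    (hf''c : ContinuousOn f'' (Ico (0:ℝ) tstar))
    (hconv : ∀ t ∈ Ico (0:ℝ) tstar, Istar - ε ≤ f t → -K ≤ f'' t) :
    ¬ (Filter.limsup f (nhdsWithin tstar (Iio tstar)) = Istar ∧
       Filter.liminf f (nhdsWithin tstar (Iio tstar)) < Istar - ε) :=
  stmt_12_general tstar Istar K ε htstar hK hε f f' f'' hf' hf'' hconv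
end

section
/- Let f(ξ) = -√(-2M₀ log ξ) for ξ ∈ (0,1), with M₀ > 0, and let r, R : [t₁, t₀) → (0,1) be C¹ functions, both tending to 0 as t → t₀⁻, with ṙ(t)/f(r(t)) → 1 and Ṙ(t)/f(R(t)) → 1 as t → t₀⁻, and r, R decreasing near t₀. Then r(t)/R(t) → 1 as t → t₀⁻. -/
/-!
The paper's `f` is `-speed M₀`, and `Φ = arrivalTime M₀`, `Φ(ξ) = ∫₀^ξ dη / speed M₀ η`, is the
time the flow `ξ̇ = f(ξ)` needs to carry `ξ` to `0`. Along both trajectories `d/dt Φ(r) → -1` and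
`Φ(r), Φ(R) → 0`, so by L'Hôpital `Φ(r) / Φ(R) → 1`. The integrand increases, hence `Φ(x) / x` is
monotone, and this traps `r / R` between `1` and `Φ(r) / Φ(R)`.
-/

open Set Filter Topology MeasureTheory intervalIntegral

theorem mul_integral_le_mul_integral_of_monotoneOn {f : ℝ → ℝ} {x y : ℝ}
    (hf : MonotoneOn f (Icc 0 y)) (hx : 0 ≤ x) (hxy : x ≤ y) :
    y * ∫ t in 0..x, f t ≤ x * ∫ t in 0..y, f t := by
  have hf₁ : MonotoneOn f (Icc 0 x) := hf.mono (Icc_subset_Icc_right hxy)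
  have hf₂ : MonotoneOn f (Icc x y) := hf.mono (Icc_subset_Icc_left hx)
  have hint₁ : IntervalIntegrable f volume 0 x := (uIcc_of_le hx ▸ hf₁).intervalIntegrable
  have hint₂ : IntervalIntegrable f volume x y := (uIcc_of_le hxy ▸ hf₂).intervalIntegrable
  have hlow : ∫ t in 0..x, f t ≤ x * f x := by
    simpa using integral_mono_on hx hint₁ intervalIntegrable_const
      fun t ht => hf₁ ht (right_mem_Icc.2 hx) ht.2
  have hhigh : (y - x) * f x ≤ ∫ t in x..y, f t := by
    simpa using integral_mono_on hxy intervalIntegrable_const hint₂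
      fun t ht => hf₂ (left_mem_Icc.2 hxy) ht ht.1
  rw [← integral_add_adjacent_intervals hint₁ hint₂]
  nlinarith [mul_le_mul_of_nonneg_left hlow (sub_nonneg.2 hxy), mul_le_mul_of_nonneg_left hhigh hx]

theorem MonotoneOn.monotoneOn_integral_div {f : ℝ → ℝ} {b : ℝ} (hf : MonotoneOn f (Ico 0 b)) :
    MonotoneOn (fun x => (∫ t in 0..x, f t) / x) (Ioo 0 b) := by
  intro x hx y hy hxy
  rw [div_le_div_iff₀ hx.1 hy.1]
  linarith [mul_integral_le_mul_integral_of_monotoneOn (hf.mono (Icc_subset_Ico_right hy.2))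
    hx.1.le hxy]

theorem abs_div_sub_one_le_of_monotoneOn_div {φ : ℝ → ℝ} {s : Set ℝ} (hs : s ⊆ Ioi 0)
    (hφ : MonotoneOn (fun x => φ x / x) s) (hpos : ∀ x ∈ s, 0 < φ x) {x y : ℝ}
    (hx : x ∈ s) (hy : y ∈ s) :
    |x / y - 1| ≤ |φ x / φ y - 1| := by
  have hx₀ : 0 < x := hs hx
  have hy₀ : 0 < y := hs hy
  have hφx := hpos x hx
  have hφy := hpos y hy
  rcases le_total x y with hxy | hyx
  · have h := hφ hx hy hxy
    have hφ_le : φ x / φ y ≤ x / y := by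
      rw [div_le_div_iff₀ hx₀ hy₀] at h
      rw [div_le_div_iff₀ hφy hy₀]
      linarith
    have hle_one : x / y ≤ 1 := (div_le_one hy₀).2 hxy
    rw [abs_of_nonpos (by linarith), abs_of_nonpos (by linarith)]
    linarith
  · have h := hφ hy hx hyx
    have hle_φ : x / y ≤ φ x / φ y := by
      rw [div_le_div_iff₀ hy₀ hx₀] at h
      rw [div_le_div_iff₀ hy₀ hφy]
      linarith
    have hone_le : 1 ≤ x / y := (one_le_div hy₀).2 hyx
    rw [abs_of_nonneg (by linarith), abs_of_nonneg (by linarith)]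
    linarith

theorem tendsto_div_of_tendsto_comp_div {α : Type*} {l : Filter α} {φ : ℝ → ℝ} {s : Set ℝ}
    (hs : s ⊆ Ioi 0) (hφ : MonotoneOn (fun x => φ x / x) s) (hpos : ∀ x ∈ s, 0 < φ x)
    {a b : α → ℝ} (ha : ∀ᶠ t in l, a t ∈ s) (hb : ∀ᶠ t in l, b t ∈ s)
    (h : Tendsto (fun t => φ (a t) / φ (b t)) l (𝓝 1)) :
    Tendsto (fun t => a t / b t) l (𝓝 1) := by
  rw [tendsto_iff_norm_sub_tendsto_zero] at h ⊢
  refine squeeze_zero' (Eventually.of_forall fun _ => norm_nonneg _) ?_ h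
  filter_upwards [ha, hb] with t hat hbt
  exact abs_div_sub_one_le_of_monotoneOn_div hs hφ hpos hat hbt

noncomputable def speed (M₀ ξ : ℝ) : ℝ := Real.sqrt (-2 * M₀ * Real.log ξ)

noncomputable def arrivalTime (M₀ ξ : ℝ) : ℝ := ∫ η in 0..ξ, 1 / speed M₀ η

section

variable {M₀ : ℝ}

theorem speed_pos (hM₀ : 0 < M₀) {x : ℝ} (hx : x ∈ Ioo 0 1) : 0 < speed M₀ x := by
  have := Real.log_neg hx.1 hx.2
  exact Real.sqrt_pos.2 (by nlinarith)

theorem antitoneOn_speed (hM₀ : 0 ≤ M₀) : AntitoneOn (speed M₀) (Ioi 0) := by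
  intro x hx y _ hxy
  have := Real.log_le_log hx hxy
  exact Real.sqrt_le_sqrt (by nlinarith)

/-- At `0` this uses `speed M₀ 0 = 0`, so that `1 / speed M₀ 0 = 0`. -/
theorem monotoneOn_one_div_speed (hM₀ : 0 < M₀) :
    MonotoneOn (fun x => 1 / speed M₀ x) (Ico 0 1) := by
  intro x hx y hy hxy
  rcases hx.1.eq_or_lt with rfl | hx₀
  · simp [speed]
  · exact one_div_le_one_div_of_le (speed_pos hM₀ ⟨hx₀.trans_le hxy, hy.2⟩)
      (antitoneOn_speed hM₀.le hx₀ (hx₀.trans_le hxy) hxy)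

theorem intervalIntegrable_one_div_speed (hM₀ : 0 < M₀) {x : ℝ} (hx : x ∈ Ico 0 1) :
    IntervalIntegrable (fun η => 1 / speed M₀ η) volume 0 x :=
  ((monotoneOn_one_div_speed hM₀).mono
    (uIcc_of_le hx.1 ▸ Icc_subset_Ico_right hx.2)).intervalIntegrable

theorem continuousOn_one_div_speed (hM₀ : 0 < M₀) :
    ContinuousOn (fun x => 1 / speed M₀ x) (Ioo 0 1) := fun _ hx =>
  (continuousAt_const.div ((Real.continuousAt_log hx.1.ne').const_mul _).sqrt
    (speed_pos hM₀ hx).ne').continuousWithinAt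

theorem hasDerivAt_arrivalTime (hM₀ : 0 < M₀) {x : ℝ} (hx : x ∈ Ioo 0 1) :
    HasDerivAt (arrivalTime M₀) (1 / speed M₀ x) x :=
  integral_hasDerivAt_right (intervalIntegrable_one_div_speed hM₀ (Ioo_subset_Ico_self hx))
    ((continuousOn_one_div_speed hM₀).stronglyMeasurableAtFilter isOpen_Ioo x hx)
    ((continuousOn_one_div_speed hM₀).continuousAt (isOpen_Ioo.mem_nhds hx))

theorem HasDerivAt.arrivalTime (hM₀ : 0 < M₀) {f : ℝ → ℝ} {f' x : ℝ} (hf : HasDerivAt f f' x)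
    (hx : f x ∈ Ioo 0 1) :
    HasDerivAt (fun t => arrivalTime M₀ (f t)) (f' / speed M₀ (f x)) x :=
  ((hasDerivAt_arrivalTime hM₀ hx).comp x hf).congr_deriv (one_div_mul_eq_div _ _)

theorem arrivalTime_pos (hM₀ : 0 < M₀) {x : ℝ} (hx : x ∈ Ioo 0 1) : 0 < arrivalTime M₀ x :=
  intervalIntegral_pos_of_pos_on (intervalIntegrable_one_div_speed hM₀ (Ioo_subset_Ico_self hx))
    (fun _ hη => one_div_pos.2 (speed_pos hM₀ ⟨hη.1, hη.2.trans hx.2⟩)) hx.1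

theorem monotoneOn_arrivalTime_div (hM₀ : 0 < M₀) :
    MonotoneOn (fun x => arrivalTime M₀ x / x) (Ioo 0 1) :=
  (monotoneOn_one_div_speed hM₀).monotoneOn_integral_div

theorem tendsto_arrivalTime_nhdsGT_zero (hM₀ : 0 < M₀) :
    Tendsto (arrivalTime M₀) (𝓝[>] 0) (𝓝 0) := by
  have hcont : ContinuousOn (arrivalTime M₀) (uIcc 0 (1 / 2)) :=
    continuousOn_primitive_interval' (intervalIntegrable_one_div_speed hM₀ (by norm_num))
      left_mem_uIcc
  rw [uIcc_of_le (by norm_num)] at hcont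
  have := (hcont 0 (by norm_num)).tendsto
  simp only [arrivalTime, integral_same] at this
  exact this.mono_left (nhdsWithin_le_of_mem (Icc_mem_nhdsGT (by norm_num)))

theorem Filter.Tendsto.arrivalTime {α : Type*} {l : Filter α} (hM₀ : 0 < M₀) {f : α → ℝ}
    (hf : Tendsto f l (𝓝 0)) (hf₀ : ∀ᶠ t in l, 0 < f t) :
    Tendsto (fun t => arrivalTime M₀ (f t)) l (𝓝 0) :=
  (tendsto_arrivalTime_nhdsGT_zero hM₀).comp (tendsto_nhdsWithin_iff.2 ⟨hf, hf₀⟩)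

end

theorem stmt_18_general (M₀ t₁ t₀ : ℝ) (hM₀ : 0 < M₀) (ht : t₁ < t₀)
    (r R r' R' : ℝ → ℝ)
    (hrmem : ∀ t ∈ Ico t₁ t₀, r t ∈ Ioo (0:ℝ) 1)
    (hRmem : ∀ t ∈ Ico t₁ t₀, R t ∈ Ioo (0:ℝ) 1)
    (hr' : ∀ t ∈ Ico t₁ t₀, HasDerivAt r (r' t) t)
    (hR' : ∀ t ∈ Ico t₁ t₀, HasDerivAt R (R' t) t)
    (hr0 : Tendsto r (nhdsWithin t₀ (Iio t₀)) (nhds 0))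
    (hR0 : Tendsto R (nhdsWithin t₀ (Iio t₀)) (nhds 0))
    (hras : Tendsto (fun t => r' t / (-(Real.sqrt (-2 * M₀ * Real.log (r t)))))
      (nhdsWithin t₀ (Iio t₀)) (nhds 1))
    (hRas : Tendsto (fun t => R' t / (-(Real.sqrt (-2 * M₀ * Real.log (R t)))))
      (nhdsWithin t₀ (Iio t₀)) (nhds 1)) :
    Tendsto (fun t => r t / R t) (nhdsWithin t₀ (Iio t₀)) (nhds 1) := by
  have hnear : ∀ᶠ t in 𝓝[<] t₀, t ∈ Ico t₁ t₀ := Ico_mem_nhdsLT ht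
  have hr := hnear.mono hrmem
  have hR := hnear.mono hRmem
  refine tendsto_div_of_tendsto_comp_div Ioo_subset_Ioi_self (monotoneOn_arrivalTime_div hM₀)
    (fun _ => arrivalTime_pos hM₀) hr hR ?_
  refine HasDerivAt.lhopital_zero_nhdsLT (f' := fun t => r' t / speed M₀ (r t))
    (g' := fun t => R' t / speed M₀ (R t)) ?_ ?_ ?_
    (hr0.arrivalTime hM₀ (hr.mono fun _ h => h.1))
    (hR0.arrivalTime hM₀ (hR.mono fun _ h => h.1)) ?_
  · filter_upwards [hr, hnear.mono hr'] with t h h' using h'.arrivalTime hM₀ h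
  · filter_upwards [hR, hnear.mono hR'] with t h h' using h'.arrivalTime hM₀ h
  · filter_upwards [hRas.eventually_ne one_ne_zero] with t h
    simpa [div_neg, speed] using h
  · have h := hras.div hRas one_ne_zero
    rw [div_one] at h
    refine h.congr fun t => ?_
    simp only [Pi.div_apply, speed]
    ring

theorem stmt_18 (M₀ t₁ t₀ : ℝ) (hM₀ : 0 < M₀) (ht : t₁ < t₀)
    (r R r' R' : ℝ → ℝ)
    (hrmem : ∀ t ∈ Ico t₁ t₀, r t ∈ Ioo (0:ℝ) 1)
    (hRmem : ∀ t ∈ Ico t₁ t₀, R t ∈ Ioo (0:ℝ) 1)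
    (hr' : ∀ t ∈ Ico t₁ t₀, HasDerivAt r (r' t) t)
    (hR' : ∀ t ∈ Ico t₁ t₀, HasDerivAt R (R' t) t)
    (hr'c : ContinuousOn r' (Ico t₁ t₀)) (hR'c : ContinuousOn R' (Ico t₁ t₀))
    (hr0 : Tendsto r (nhdsWithin t₀ (Iio t₀)) (nhds 0))
    (hR0 : Tendsto R (nhdsWithin t₀ (Iio t₀)) (nhds 0))
    (hras : Tendsto (fun t => r' t / (-(Real.sqrt (-2 * M₀ * Real.log (r t)))))
      (nhdsWithin t₀ (Iio t₀)) (nhds 1))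
    (hRas : Tendsto (fun t => R' t / (-(Real.sqrt (-2 * M₀ * Real.log (R t)))))
      (nhdsWithin t₀ (Iio t₀)) (nhds 1))
    (hmono : ∃ t₂ ∈ Ico t₁ t₀, StrictAntiOn r (Ico t₂ t₀) ∧ StrictAntiOn R (Ico t₂ t₀)) :
    Tendsto (fun t => r t / R t) (nhdsWithin t₀ (Iio t₀)) (nhds 1) :=
  stmt_18_general M₀ t₁ t₀ hM₀ ht r R r' R' hrmem hRmem hr' hR' hr0 hR0 hras hRas
end
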